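/- Let N(t) be a centered Gaussian process on [0,1] with increments satisfying E[(N(t) - N(s))²] ≤ C√(t-s)·(|log(t-s)| + 1)·exp(-Δ²/(2)) for all 0 ≤ s < t ≤ 1 and a constant C, Δ ≥ 1. Then there exist constants c, C' > 0 (independent of Δ, r) such that for all r > 0, P(sup_{t ≤ 1} |N(t)| > r) ≤ c·exp(-C'·r²·exp(Δ²/2)). -/

import Mathlib

/-!
Chaining over the dyadic grid. An increment of `N` over a dyadic interval of length `2⁻ⁿ` is
Gaussian with variance at most `2Cn·2^(-n/2)·e^(-Δ²/2)`. Allotting it the budget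
`aₙ = r/10·(9/10)ⁿ` (so that `∑ aₙ ≤ r`), the Gaussian tail of one such increment is
`2·exp(-aₙ²/(2·variance))`, and because `(81/100)·√2 > 1` the exponent is at least
`β·n·r²·e^(Δ²/2)` for a constant `β` depending only on `C`. A union bound over the `2ⁿ`
increments of each level then gives a geometric series, summing to `8·exp(-β r² e^(Δ²/2))`
once `exp(-β r² e^(Δ²/2)) ≤ 1/4`; otherwise that bound exceeds one.
-/

open MeasureTheory ProbabilityTheory Real
open scoped ENNReal NNReal

open Finset in
lemma abs_apply_dyadic_le_sum {f : ℝ → ℝ} (h0 : f 0 = 0) {a : ℕ → ℝ}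
    (hinc : ∀ i, ∀ j : ℕ, j < 2 ^ (i + 1) →
      |f ((j + 1) / 2 ^ (i + 1)) - f (j / 2 ^ (i + 1))| ≤ a i) :
    ∀ n, ∀ k : ℕ, k < 2 ^ n → |f (k / 2 ^ n)| ≤ ∑ i ∈ range n, a i := by
  intro n
  induction n with
  | zero => intro k hk; simp [Nat.lt_one_iff.1 (by simpa using hk), h0]
  | succ n ih =>
    intro k hk
    obtain ⟨m, rfl | rfl⟩ := Nat.even_or_odd' k
    all_goals
      have hm : m < 2 ^ n := by rw [pow_succ] at hk; omega
      have hmid : ((2 * m : ℕ) : ℝ) / 2 ^ (n + 1) = m / 2 ^ n := by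
        push_cast; rw [pow_succ]; field_simp
      rw [sum_range_succ]
    · have ha : 0 ≤ a n := (abs_nonneg _).trans (hinc n 0 (by positivity))
      rw [hmid]
      linarith [ih m hm]
    · have hstep := hinc n (2 * m) (by rw [pow_succ]; omega)
      rw [hmid] at hstep
      push_cast at hstep ⊢
      linarith [ih m hm, abs_sub_abs_le_abs_sub (f ((2 * m + 1) / 2 ^ (n + 1))) (f (m / 2 ^ n))]

lemma tendsto_floor_mul_two_pow_div_two_pow {t : ℝ} (ht : 0 ≤ t) :
    Filter.Tendsto (fun n : ℕ ↦ (⌊t * 2 ^ n⌋₊ : ℝ) / 2 ^ n) Filter.atTop (nhds t) :=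
  (tendsto_nat_floor_mul_div_atTop ht).comp (tendsto_pow_atTop_atTop_of_one_lt one_lt_two)

lemma abs_le_of_dyadic_increments {f : ℝ → ℝ} (hf : Continuous f) (h0 : f 0 = 0) {a : ℕ → ℝ}
    {r : ℝ} (hsum : ∀ n, ∑ i ∈ Finset.range n, a i ≤ r)
    (hinc : ∀ i, ∀ j : ℕ, j < 2 ^ (i + 1) →
      |f ((j + 1) / 2 ^ (i + 1)) - f (j / 2 ^ (i + 1))| ≤ a i)
    {t : ℝ} (ht : t ∈ Set.Icc 0 1) : |f t| ≤ r := by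
  have hclosed : IsClosed {t | |f t| ≤ r} := isClosed_le (by fun_prop) continuous_const
  suffices Set.Ico (0 : ℝ) 1 ⊆ {t | |f t| ≤ r} by
    rw [← closure_Ico zero_ne_one] at ht
    exact closure_minimal this hclosed ht
  rintro t ⟨ht0, ht1⟩
  refine hclosed.mem_of_tendsto (tendsto_floor_mul_two_pow_div_two_pow ht0)
    (Filter.Eventually.of_forall fun n ↦ ?_)
  have hfloor : ⌊t * 2 ^ n⌋₊ < 2 ^ n := by
    rw [Nat.floor_lt (by positivity)]
    push_cast
    nlinarith [pow_pos (two_pos (α := ℝ)) n]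
  exact (abs_apply_dyadic_le_sum h0 hinc n _ hfloor).trans (hsum n)

lemma measure_exists_lt_abs_le_tsum {Ω : Type*} [MeasurableSpace Ω] (μ : Measure Ω)
    {N : Ω → ℝ → ℝ} (hcont : ∀ ω, Continuous (N ω)) (h0 : ∀ ω, N ω 0 = 0) {a : ℕ → ℝ} {r : ℝ}
    (hsum : ∀ n, ∑ i ∈ Finset.range n, a i ≤ r) {p : ℕ → ℝ≥0∞}
    (htail : ∀ i, ∀ j : ℕ, j < 2 ^ (i + 1) →
      μ {ω | a i < |N ω ((j + 1) / 2 ^ (i + 1)) - N ω (j / 2 ^ (i + 1))|} ≤ p i) :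
    μ {ω | ∃ t ∈ Set.Icc (0 : ℝ) 1, r < |N ω t|} ≤ ∑' i, 2 ^ (i + 1) * p i := by
  set A : ℕ → ℕ → Set Ω :=
    fun i j ↦ {ω | a i < |N ω ((j + 1) / 2 ^ (i + 1)) - N ω (j / 2 ^ (i + 1))|}
  have hsub : {ω | ∃ t ∈ Set.Icc (0 : ℝ) 1, r < |N ω t|} ⊆
      ⋃ i, ⋃ j ∈ Finset.range (2 ^ (i + 1)), A i j := by
    rintro ω ⟨t, ht, hrt⟩
    by_contra hω
    simp only [Set.mem_iUnion, Finset.mem_range, not_exists, not_lt, A, Set.mem_ofPred_eq] at hω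
    exact hrt.not_ge (abs_le_of_dyadic_increments (hcont ω) (h0 ω) hsum hω ht)
  calc _ ≤ μ (⋃ i, ⋃ j ∈ Finset.range (2 ^ (i + 1)), A i j) := measure_mono hsub
    _ ≤ ∑' i, ∑ j ∈ Finset.range (2 ^ (i + 1)), μ (A i j) :=
      (measure_iUnion_le _).trans (ENNReal.tsum_le_tsum fun i ↦ measure_biUnion_finset_le _ _)
    _ ≤ ∑' i, ∑ _j ∈ Finset.range (2 ^ (i + 1)), p i :=
      ENNReal.tsum_le_tsum fun i ↦ Finset.sum_le_sum fun j hj ↦ htail i j (Finset.mem_range.1 hj)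
    _ = ∑' i, 2 ^ (i + 1) * p i := by simp

lemma hasSubgaussianMGF_id_gaussianReal {v c : ℝ≥0} (hvc : v ≤ c) :
    HasSubgaussianMGF id c (gaussianReal 0 v) where
  integrable_exp_mul := integrable_exp_mul_gaussianReal
  mgf_le t := by
    simp only [mgf_id_gaussianReal, zero_mul, zero_add]
    gcongr

lemma ProbabilityTheory.HasSubgaussianMGF.measure_le_abs_le {Ω : Type*} [MeasurableSpace Ω]
    {μ : Measure Ω} [IsFiniteMeasure μ] {X : Ω → ℝ} {c : ℝ≥0} (h : HasSubgaussianMGF X c μ) {ε : ℝ}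
    (hε : 0 ≤ ε) : μ {ω | ε ≤ |X ω|} ≤ ENNReal.ofReal (2 * exp (-ε ^ 2 / (2 * c))) := by
  have htail {Y : Ω → ℝ} (hY : HasSubgaussianMGF Y c μ) :
      μ {ω | ε ≤ Y ω} ≤ ENNReal.ofReal (exp (-ε ^ 2 / (2 * c))) := by
    rw [← ofReal_measureReal]
    exact ENNReal.ofReal_le_ofReal (hY.measure_ge_le hε)
  have hunion : {ω | ε ≤ |X ω|} = {ω | ε ≤ X ω} ∪ {ω | ε ≤ (-X) ω} := by
    ext ω; simp [le_abs', le_neg, or_comm]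
  calc _ ≤ μ {ω | ε ≤ X ω} + μ {ω | ε ≤ (-X) ω} := hunion ▸ measure_union_le _ _
    _ ≤ _ := by
      rw [two_mul, ENNReal.ofReal_add (by positivity) (by positivity)]
      exact add_le_add (htail h) (htail h.neg)

/-- Stated for any `σ2 ≥ v`: at `v = 0` the bound with `σ2 = v` is `2 * exp 0`, as `x / 0 = 0`. -/
lemma measure_lt_abs_le_of_map_eq_gaussianReal {Ω : Type*} [MeasurableSpace Ω] {μ : Measure Ω}
    [IsProbabilityMeasure μ] {X : Ω → ℝ} (hX : Measurable X) {v : ℝ≥0}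
    (hmap : μ.map X = gaussianReal 0 v) {σ2 : ℝ} (hv : (v : ℝ) ≤ σ2) {ε : ℝ} (hε : 0 ≤ ε) :
    μ {ω | ε < |X ω|} ≤ ENNReal.ofReal (2 * exp (-ε ^ 2 / (2 * σ2))) := by
  have hσ2 : 0 ≤ σ2 := v.2.trans hv
  have hX' : HasSubgaussianMGF X σ2.toNNReal μ :=
    (HasSubgaussianMGF.id_map_iff hX.aemeasurable).1
      (hmap ▸ hasSubgaussianMGF_id_gaussianReal ((Real.le_toNNReal_iff_coe_le hσ2).2 hv))
  refine (measure_mono (Set.ofPred_subset_ofPred.2 fun _ ↦ le_of_lt)).trans ?_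
  simpa only [Real.coe_toNNReal _ hσ2] using hX'.measure_le_abs_le hε

lemma exists_pos_mul_add_one_sq_le_pow {q : ℝ} (hq : 1 < q) :
    ∃ κ > 0, ∀ n : ℕ, κ * (n + 1) ^ 2 ≤ q ^ n := by
  obtain ⟨M, hM⟩ := (tendsto_pow_const_div_const_pow_of_one_lt 2 hq).bddAbove_range
  have hq0 : 0 < q := one_pos.trans hq
  refine ⟨1 / (max M 1 * q), by positivity, fun n ↦ ?_⟩
  have hn : ((n + 1 : ℕ) : ℝ) ^ 2 / q ^ (n + 1) ≤ max M 1 :=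
    (hM ⟨n + 1, rfl⟩).trans (le_max_left _ _)
  rw [div_le_iff₀ (by positivity)] at hn
  push_cast at hn
  rw [one_div, inv_mul_le_iff₀ (by positivity)]
  calc _ ≤ max M 1 * q ^ (n + 1) := hn
    _ = _ := by ring

lemma sqrt_pow_of_nonneg {x : ℝ} (hx : 0 ≤ x) (n : ℕ) : √(x ^ n) = √x ^ n := by
  rw [← sqrt_sq (pow_nonneg (sqrt_nonneg x) n), ← pow_mul, mul_comm, pow_mul, sq_sqrt hx]

lemma sqrt_inv_two_pow_mul_abs_log_add_one_le (n : ℕ) :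
    √((2 ^ (n + 1))⁻¹) * (|log ((2 ^ (n + 1))⁻¹)| + 1) ≤ 2 * (n + 1) / √2 ^ (n + 1) := by
  have hlog : |log ((2 : ℝ) ^ (n + 1))⁻¹| = (n + 1) * log 2 := by
    rw [log_inv, log_pow, abs_neg, abs_of_nonneg (by positivity)]
    push_cast; ring
  rw [sqrt_inv, sqrt_pow_of_nonneg zero_le_two, hlog, inv_mul_eq_div]
  gcongr
  nlinarith [log_two_lt_d9, (Nat.cast_nonneg n : (0 : ℝ) ≤ n)]

lemma tsum_two_pow_mul_ofReal_le {y : ℝ} (hy0 : 0 ≤ y) (hy : 4 * y ≤ 1) :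
    ∑' i : ℕ, 2 ^ (i + 1) * ENNReal.ofReal (2 * y ^ (i + 1)) ≤ ENNReal.ofReal (8 * y) := by
  calc ∑' i : ℕ, 2 ^ (i + 1) * ENNReal.ofReal (2 * y ^ (i + 1))
      ≤ ∑' i : ℕ, ENNReal.ofReal (4 * y) * 2⁻¹ ^ i := ENNReal.tsum_le_tsum fun i ↦ by
        rw [← ENNReal.ofReal_ofNat 2, ← ENNReal.ofReal_pow zero_le_two,
          ← ENNReal.ofReal_mul (by positivity), ← ENNReal.ofReal_inv_of_pos two_pos,
          ← ENNReal.ofReal_pow (by positivity), ← ENNReal.ofReal_mul (by positivity)]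
        apply ENNReal.ofReal_le_ofReal
        calc (2 : ℝ) ^ (i + 1) * (2 * y ^ (i + 1)) = 4 * y * (2 * y) ^ i := by ring
          _ ≤ 4 * y * 2⁻¹ ^ i := by gcongr; linarith
    _ = ENNReal.ofReal (8 * y) := by
      rw [ENNReal.tsum_mul_left, ENNReal.tsum_geometric, ENNReal.one_sub_inv_two, inv_inv,
        ← ENNReal.ofReal_ofNat 2, ← ENNReal.ofReal_mul (by positivity)]
      ring_nf

lemma measure_lt_abs_le_of_dyadic_variance {Ω : Type*} [MeasurableSpace Ω] {μ : Measure Ω}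
    [IsProbabilityMeasure μ] {C Δ κ r : ℝ} (hC : 0 < C) (hr : 0 ≤ r) {i : ℕ}
    (hκ : κ * (i + 1) ^ 2 ≤ (81 / 100 * √2) ^ i) {X : Ω → ℝ} (hX : Measurable X) {v : ℝ≥0}
    (hmap : μ.map X = gaussianReal 0 v)
    (hv : (v : ℝ) ≤
      C * √((2 ^ (i + 1))⁻¹) * (|log ((2 ^ (i + 1))⁻¹)| + 1) * exp (-(Δ ^ 2) / 2)) :
    μ {ω | r / 10 * (9 / 10) ^ i < |X ω|} ≤
      ENNReal.ofReal (2 * exp (-(κ / (400 * C)) * r ^ 2 * exp (Δ ^ 2 / 2)) ^ (i + 1)) := by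
  set E := exp (Δ ^ 2 / 2)
  have hE : exp (-(Δ ^ 2) / 2) = E⁻¹ := by rw [neg_div, exp_neg]
  have hvσ : (v : ℝ) ≤ C * (2 * (i + 1) / √2 ^ (i + 1)) * E⁻¹ := by
    refine hv.trans ?_
    rw [mul_assoc C, hE]
    gcongr
    exact sqrt_inv_two_pow_mul_abs_log_add_one_le i
  refine (measure_lt_abs_le_of_map_eq_gaussianReal hX hmap hvσ (by positivity)).trans ?_
  gcongr
  rw [← exp_nat_mul, exp_le_exp]
  have hgrowth : κ * (i + 1) ^ 2 / √2 ^ (i + 1) ≤ (81 / 100) ^ i := by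
    rw [div_le_iff₀ (by positivity)]
    calc _ ≤ (81 / 100 * √2) ^ i := hκ
      _ ≤ (81 / 100 * √2) ^ i * √2 := le_mul_of_one_le_right (by positivity) one_lt_sqrt_two.le
      _ = _ := by ring
  rw [neg_div, neg_le, le_div_iff₀ (by positivity)]
  have hE0 : E ≠ 0 := (exp_pos _).ne'
  calc _ = r ^ 2 / 100 * (κ * (i + 1) ^ 2 / √2 ^ (i + 1)) := by
        field_simp
        push_cast
        ring
    _ ≤ r ^ 2 / 100 * (81 / 100) ^ i := by gcongr
    _ = _ := by rw [mul_pow, ← pow_mul, mul_comm i 2, pow_mul]; ring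

/-- chaining/Gaussian concentration for a continuous centered Gaussian
process `N` on `[0,1]` with `N(0) = 0` and increment variances bounded by
`C√(t-s)(|log(t-s)|+1)exp(-Δ²/2)`: there are constants `c, C' > 0` independent of `Δ`
and `r` such that `P(sup_{t≤1} |N(t)| > r) ≤ c·exp(-C'·r²·exp(Δ²/2))` for all `r > 0`. -/
theorem stmt_10 (C : ℝ) (hC : 0 < C) :
    ∃ c C' : ℝ, 0 < c ∧ 0 < C' ∧
      ∀ (Ω : Type) (_ : MeasureSpace Ω), IsProbabilityMeasure (volume : Measure Ω) →
        ∀ (Δ : ℝ), 1 ≤ Δ →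
          ∀ N : Ω → ℝ → ℝ,
            (∀ ω, Continuous (N ω)) →
            (∀ ω, N ω 0 = 0) →
            (∀ s, Measurable fun ω => N ω s) →
            (∀ s t : ℝ, 0 ≤ s → s < t → t ≤ 1 →
              ∃ v : ℝ≥0,
                (v : ℝ) ≤
                  C * Real.sqrt (t - s) * (|Real.log (t - s)| + 1) *
                    Real.exp (-(Δ ^ 2) / 2) ∧
                Measure.map (fun ω => N ω t - N ω s) (volume : Measure Ω) =
                  gaussianReal 0 v) →
            ∀ r : ℝ, 0 < r →
              (volume : Measure Ω) {ω | ∃ t ∈ Set.Icc (0 : ℝ) 1, r < |N ω t|} ≤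
                ENNReal.ofReal (c * Real.exp (-C' * r ^ 2 * Real.exp (Δ ^ 2 / 2))) := by
  have hq : 1 < 81 / 100 * √2 := by nlinarith [sq_sqrt (zero_le_two : (0 : ℝ) ≤ 2), sqrt_nonneg 2]
  obtain ⟨κ, hκ, hgrowth⟩ := exists_pos_mul_add_one_sq_le_pow hq
  refine ⟨8, κ / (400 * C), by norm_num, by positivity, ?_⟩
  intro Ω _ _ Δ _ N hcont h0 hmeas hvar r hr
  set y := exp (-(κ / (400 * C)) * r ^ 2 * exp (Δ ^ 2 / 2))
  by_cases hy : 4 * y ≤ 1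
  · have hbudget (n : ℕ) : ∑ i ∈ Finset.range n, r / 10 * (9 / 10) ^ i ≤ r := by
      rw [← Finset.mul_sum]
      nlinarith [mul_neg_geom_sum (9 / 10 : ℝ) n, pow_nonneg (by norm_num : (0 : ℝ) ≤ 9 / 10) n]
    refine (measure_exists_lt_abs_le_tsum volume hcont h0 hbudget fun i j hj ↦ ?_).trans
      (tsum_two_pow_mul_ofReal_le (exp_pos _).le hy)
    have hj : (j : ℝ) + 1 ≤ 2 ^ (i + 1) := by exact_mod_cast hj
    obtain ⟨v, hv, hmap⟩ := hvar (j / 2 ^ (i + 1)) ((j + 1) / 2 ^ (i + 1)) (by positivity)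
      (div_lt_div_of_pos_right (lt_add_one _) (by positivity))
      (div_le_one_of_le₀ hj (by positivity))
    rw [← sub_div, add_sub_cancel_left, one_div] at hv
    exact measure_lt_abs_le_of_dyadic_variance hC hr.le (hgrowth i)
      ((hmeas _).sub (hmeas _)) hmap hv
  · calc _ ≤ 1 := prob_le_one
      _ ≤ _ := by
        rw [← ENNReal.ofReal_one]
        exact ENNReal.ofReal_le_ofReal (by linarith)
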